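/- Let v_1,...,v_N be elements of a commutative ring and fix n with 1 ≤ n ≤ N. Define functions f_0(v) = v and recursively f_i(v_d) = v_d · (C_{i-1} − (n − i) · f_{i-1}(v_d)) where C_i = Σ_{d=1}^{N} f_i(v_d). Then the n-th elementary symmetric polynomial of v_1,...,v_N equals (1/n!) · C_{n-1}. Equivalently, n! · σ_{N,n} = C_{n-1}. -/

import Mathlib

/-! Write `e_k` for `esymm v N k` and `p_m` for the power sum `∑_d v_d ^ m`. Since
`∑_m (-v_d) ^ m e_{k-m}` is the `k`-th elementary symmetric polynomial of the `v`'s with `v_d`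
deleted, `Φ_i = ∑_m (-1) ^ m e_{n-1-i-m} ∑_d v_d ^ m f_i(v_d)` pairs `f_i` with these
"deleted" polynomials. Newton's identity `k e_k = ∑_{m<k} (-1) ^ m e_{k-1-m} p_{m+1}` gives
`Φ_0 = n e_n` and, inserted into the recursion, `Φ_{i+1} = (n-1-i) Φ_i`; finally
`Φ_{n-1} = ∑_d f_{n-1}(v_d) = C_{n-1}`, so `C_{n-1} = n (n-1) ⋯ 1 · e_n`. -/

/-- `esymm v N n`: the `n`-th elementary symmetric polynomial in
`v 0, …, v (N-1)`. -/
def esymm {R : Type*} [CommRing R] (v : ℕ → R) (N n : ℕ) : R :=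
  ∑ t ∈ (Finset.range N).powersetCard n, ∏ k ∈ t, v k

open Finset

section

variable {R : Type*} [CommRing R] (v : ℕ → R) (N : ℕ)

def powerSum (m : ℕ) : R := ∑ d ∈ range N, v d ^ m

theorem esymm_eq_aeval (k : ℕ) :
    esymm v N k = MvPolynomial.aeval (fun i : Fin N => v i) (MvPolynomial.esymm (Fin N) R k) := by
  rw [MvPolynomial.aeval_esymm_eq_multiset_esymm, esymm, ← Finset.esymm_map_val,
    ← Nat.Iio_eq_range, ← Fin.map_valEmbedding_univ, Finset.map_val, Multiset.map_map]
  rfl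

theorem powerSum_eq_aeval (m : ℕ) :
    powerSum v N m = MvPolynomial.aeval (fun i : Fin N => v i) (MvPolynomial.psum (Fin N) R m) := by
  simp [powerSum, MvPolynomial.psum, Fin.sum_univ_eq_sum_range (fun d => v d ^ m)]

theorem mul_esymm_succ_eq_sum (k : ℕ) :
    (k + 1 : R) * esymm v N (k + 1) =
      ∑ m ∈ range (k + 1), (-1) ^ m * esymm v N (k - m) * powerSum v N (m + 1) := by
  have H := congrArg (MvPolynomial.aeval (fun i : Fin N => v i))
    (MvPolynomial.mul_esymm_eq_sum (Fin N) R (k + 1))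
  simp only [map_mul, map_sum, map_pow, map_neg, map_one, map_natCast, ← esymm_eq_aeval,
    ← powerSum_eq_aeval] at H
  rw [Nat.cast_succ] at H
  rw [H, sum_filter, Nat.sum_antidiagonal_eq_sum_range_succ_mk, sum_range_succ,
    if_neg (lt_irrefl _), add_zero, ← sum_range_reflect, mul_sum]
  refine sum_congr rfl fun m hm => ?_
  have hm : m < k + 1 := mem_range.mp hm
  rw [if_pos (by omega), show k + 1 - (k + 1 - 1 - m) = m + 1 by omega,
    show k + 1 - 1 - m = k - m by omega, ← mul_assoc, ← mul_assoc, ← pow_add]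
  congr 2
  rw [show k + 1 + 1 + (k - m) = m + 2 * (k + 1 - m) by omega, pow_add, pow_mul, neg_one_sq,
    one_pow, mul_one]

def moment (g : ℕ → R) (m : ℕ) : R := ∑ d ∈ range N, v d ^ m * g d

def esymmPairing (k : ℕ) (g : ℕ → R) : R :=
  ∑ m ∈ range (k + 1), (-1) ^ m * esymm v N (k - m) * moment v N g m

theorem esymmPairing_zero (g : ℕ → R) : esymmPairing v N 0 g = ∑ d ∈ range N, g d := by
  simp [esymmPairing, moment, esymm]

theorem esymmPairing_self (k : ℕ) : esymmPairing v N k v = (k + 1) * esymm v N (k + 1) := by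
  rw [mul_esymm_succ_eq_sum, esymmPairing]
  refine sum_congr rfl fun m _ => ?_
  simp only [moment, powerSum, pow_succ]

theorem moment_zero (g : ℕ → R) : moment v N g 0 = ∑ d ∈ range N, g d := by
  simp [moment]

theorem moment_step (g : ℕ → R) (a b : R) (m : ℕ) :
    moment v N (fun d => v d * (a - b * g d)) m =
      a * powerSum v N (m + 1) - b * moment v N g (m + 1) := by
  simp only [moment, powerSum, mul_sum, ← sum_sub_distrib]
  refine sum_congr rfl fun d _ => ?_
  ring

theorem esymmPairing_step (k : ℕ) (g : ℕ → R) :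
    esymmPairing v N k (fun d => v d * (∑ d ∈ range N, g d - (k + 1) * g d)) =
      (k + 1) * esymmPairing v N (k + 1) g := by
  set S := ∑ d ∈ range N, g d with hS
  calc esymmPairing v N k (fun d => v d * (S - (k + 1) * g d))
      = S * ∑ m ∈ range (k + 1), (-1) ^ m * esymm v N (k - m) * powerSum v N (m + 1) -
          (k + 1) * ∑ m ∈ range (k + 1), (-1) ^ m * esymm v N (k - m) * moment v N g (m + 1) :=
      by
        simp only [esymmPairing, moment_step, mul_sum, ← sum_sub_distrib]
        refine sum_congr rfl fun m _ => ?_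
        ring
    _ = (k + 1) * (∑ m ∈ range (k + 1), (-1) ^ (m + 1) * esymm v N (k + 1 - (m + 1)) *
          moment v N g (m + 1) + (-1) ^ 0 * esymm v N (k + 1 - 0) * moment v N g 0) := by
        rw [← mul_esymm_succ_eq_sum, moment_zero, ← hS, mul_add, mul_sum, mul_sum,
          sub_eq_neg_add, ← sum_neg_distrib]
        congr 1
        · refine sum_congr rfl fun m _ => ?_
          rw [Nat.add_sub_add_right]
          ring
        · rw [Nat.sub_zero]
          ring
    _ = (k + 1) * esymmPairing v N (k + 1) g := by rw [esymmPairing, sum_range_succ' _ (k + 1)]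

theorem esymmPairing_eq_descFactorial_mul {n : ℕ} {f : ℕ → ℕ → R} (hf0 : f 0 = v)
    (hf : ∀ i, f (i + 1) =
      fun d => v d * (∑ d ∈ range N, f i d - ((n - (i + 1) : ℕ) : R) * f i d))
    {i : ℕ} (hi : i < n) :
    esymmPairing v N (n - 1 - i) (f i) = n.descFactorial (i + 1) * esymm v N n := by
  induction i with
  | zero =>
    obtain ⟨k, rfl⟩ : ∃ k, n = k + 1 := ⟨n - 1, by omega⟩
    rw [hf0, Nat.add_sub_cancel, Nat.sub_zero, esymmPairing_self, Nat.descFactorial_one]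
    push_cast; ring
  | succ i ih =>
    obtain ⟨k, hk⟩ : ∃ k, n - (i + 1) = k + 1 := ⟨n - (i + 1) - 1, by omega⟩
    rw [hf, show n - 1 - (i + 1) = k by omega, hk, Nat.cast_succ, esymmPairing_step,
      show k + 1 = n - 1 - i by omega, ih (by omega), Nat.descFactorial_succ n (i + 1), hk]
    push_cast; ring

end

theorem esp_recursion_general {R : Type*} [CommRing R]
    (N n : ℕ) (hn1 : 1 ≤ n) (v : ℕ → R)
    (f : ℕ → ℕ → R) (C : ℕ → R)
    (hf0 : ∀ d, f 0 d = v d)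
    (hC : ∀ i, C i = ∑ d ∈ Finset.range N, f i d)
    (hf : ∀ i d, f (i + 1) d = v d * (C i - ((n - (i + 1) : ℕ) : R) * f i d)) :
    (n.factorial : R) * esymm v N n = C (n - 1) := by
  have hf' : ∀ i, f (i + 1) =
      fun d => v d * (∑ d ∈ range N, f i d - ((n - (i + 1) : ℕ) : R) * f i d) := fun i =>
    funext fun d => by rw [hf, hC]
  have key := esymmPairing_eq_descFactorial_mul v N (funext hf0) hf' (i := n - 1) (by omega)
  rw [Nat.sub_self, esymmPairing_zero, Nat.sub_add_cancel hn1, Nat.descFactorial_self,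
    ← hC] at key
  exact key.symm

/-- The recursive ESP formula (Theorem 2.1): with `f 0 d = v d`,
`C i = Σ_d f i d` and `f i (v_d) = v_d (C_{i-1} − (n−i) f_{i-1}(v_d))`,
one has `n! · σ_{N,n} = C_{n-1}`. -/
theorem esp_recursion {R : Type*} [CommRing R] [Algebra ℚ R]
    (N n : ℕ) (hn1 : 1 ≤ n) (hnN : n ≤ N) (v : ℕ → R)
    (f : ℕ → ℕ → R) (C : ℕ → R)
    (hf0 : ∀ d, f 0 d = v d)
    (hC : ∀ i, C i = ∑ d ∈ Finset.range N, f i d)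
    (hf : ∀ i d, f (i + 1) d = v d * (C i - ((n - (i + 1) : ℕ) : R) * f i d)) :
    (n.factorial : R) * esymm v N n = C (n - 1) :=
  esp_recursion_general N n hn1 v f C hf0 hC hf
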